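/- arXiv:2402.06538 — 3 statements merged into one kernel-verified Lean document; each statement's English description precedes it below -/
import Mathlib

section
/- Let T be a tournament on n = 2^m vertices and S a subset of the arcs of T. There is a seeding (a bijection from players to leaf positions of a balanced binary tree) such that in the resulting single-elimination tournament every match in S is played, if and only if T has a spanning binomial arborescence H whose arc set contains S. -/
universe u

/-- A single-elimination bracket: a full binary tree with players at the leaves. -/
inductive SEBracket (V : Type u) where
  | leaf : V → SEBracket V
  | node : SEBracket V → SEBracket V → SEBracket V

namespace SEBracket

variable {V : Type*}

/-- The winner of the single-elimination tournament given by a bracket,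
where `A a b` means `a` beats `b`. -/
def winner (A : V → V → Prop) [DecidableRel A] : SEBracket V → V
  | .leaf v => v
  | .node l r =>
    let a := winner A l
    let b := winner A r
    if A a b then a else b

/-- The set of (winner, loser) pairs of the matches played in the
single-elimination tournament given by a bracket. -/
def played [DecidableEq V] (A : V → V → Prop) [DecidableRel A] : SEBracket V → Finset (V × V)
  | .leaf _ => ∅
  | .node l r =>
    let a := winner A l
    let b := winner A r
    insert (if A a b then (a, b) else (b, a)) (played A l ∪ played A r)

/-- The multiset of players placed at the leaves of a bracket. -/
def players : SEBracket V → Multiset V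
  | .leaf v => {v}
  | .node l r => players l + players r

/-- A bracket is balanced of depth `n` if all leaves are at depth exactly `n`. -/
def balanced : SEBracket V → ℕ → Prop
  | .leaf _, n => n = 0
  | .node l r, n => ∃ m, n = m + 1 ∧ balanced l m ∧ balanced r m

end SEBracket

variable {V : Type*} [DecidableEq V]

/-- A binomial arborescence over relation `A`, recorded with its vertex set,
its arc set, its root and its height. -/
inductive IsBAE (A : V → V → Prop) : Finset V → Finset (V × V) → V → ℕ → Prop
  | single (a : V) : IsBAE A {a} ∅ a 0
  | join {s t : Finset V} {E F : Finset (V × V)} {a b : V} {i : ℕ} :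
      IsBAE A s E a i → IsBAE A t F b i → Disjoint s t → A a b →
      IsBAE A (s ∪ t) (insert (a, b) (E ∪ F)) a (i + 1)

/-- Classical filter on a finset (no decidability assumptions needed). -/
noncomputable def cfilter {α : Type*} (p : α → Prop) (s : Finset α) : Finset α :=
  @Finset.filter _ p (fun _ => Classical.dec _) s

/-- The descendants (inside ambient vertex set `s`) of `x` in the digraph with arc set `E`:
vertices reachable from `x`, including `x` itself (when `x ∈ s`). -/
noncomputable def desc (s : Finset V) (E : Finset (V × V)) (x : V) : Finset V :=
  cfilter (fun y => Relation.ReflTransGen (fun a b => (a, b) ∈ E) x y) s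

/-- The height `α_H(x)` of a vertex: log base 2 of its number of descendants. -/
noncomputable def hgt (s : Finset V) (E : Finset (V × V)) (x : V) : ℕ :=
  Nat.log 2 (desc s E x).card

/-- The arcs of `E` lying within the subtree of descendants of `x`. -/
noncomputable def subArcs (s : Finset V) (E : Finset (V × V)) (x : V) : Finset (V × V) :=
  cfilter (fun e => e.1 ∈ desc s E x ∧ e.2 ∈ desc s E x) E


/-! A balanced bracket on distinct players is the same thing as a binomial arborescence: the match
at a node joins the arborescences of its two sub-brackets by the arc from winner to loser, and
conversely unfolding the recursive construction of a binomial arborescence gives a bracket whose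
matches are exactly its arcs. -/

namespace SEBracket

variable (A : V → V → Prop) [DecidableRel A]

omit [DecidableEq V] in
lemma winner_mem_players : ∀ B : SEBracket V, B.winner A ∈ B.players
  | .leaf v => by simp [winner, players]
  | .node l r => by
    simp only [winner, players, Multiset.mem_add]
    split
    · exact Or.inl (winner_mem_players l)
    · exact Or.inr (winner_mem_players r)

omit [DecidableEq V] in
lemma winner_ne_of_disjoint {l r : SEBracket V} (h : Disjoint l.players r.players) :
    l.winner A ≠ r.winner A := fun heq =>
  Multiset.disjoint_left.mp h (l.winner_mem_players A) (heq ▸ r.winner_mem_players A)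

lemma isBAE_played (htotal : ∀ a b : V, a ≠ b → A a b ∨ A b a) :
    ∀ (B : SEBracket V) (n : ℕ), B.balanced n → B.players.Nodup →
      IsBAE A B.players.toFinset (B.played A) (B.winner A) n
  | .leaf v, n, (hn : n = 0), _ => by
    subst hn
    simpa [players, played, winner] using IsBAE.single (A := A) v
  | .node l r, _, ⟨k, rfl, hl, hr⟩, hnd => by
    obtain ⟨ndl, ndr, hdisj⟩ := Multiset.nodup_add.mp hnd
    have ihl := isBAE_played htotal l k hl ndl
    have ihr := isBAE_played htotal r k hr ndr
    have hdisj' := Multiset.disjoint_toFinset.mpr hdisj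
    simp only [players, played, winner, Multiset.toFinset_add]
    by_cases hab : A (l.winner A) (r.winner A)
    · simpa [hab] using IsBAE.join ihl ihr hdisj' hab
    · have hba := (htotal _ _ (winner_ne_of_disjoint A hdisj)).resolve_left hab
      have := IsBAE.join ihr ihl hdisj'.symm hba
      rw [Finset.union_comm r.players.toFinset, Finset.union_comm (r.played A)] at this
      simpa [hab] using this

end SEBracket

lemma IsBAE.exists_bracket {A : V → V → Prop} [DecidableRel A]
    {s : Finset V} {E : Finset (V × V)} {r : V} {n : ℕ} (h : IsBAE A s E r n) :
    ∃ B : SEBracket V, B.balanced n ∧ B.players = s.val ∧ B.played A = E ∧ B.winner A = r := by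
  induction h with
  | single a => exact ⟨.leaf a, rfl, rfl, rfl, rfl⟩
  | @join s t E F a b i _ _ hdisj hab ihl ihr =>
    obtain ⟨Bl, hbl, hpl, hEl, hwl⟩ := ihl
    obtain ⟨Br, hbr, hpr, hEr, hwr⟩ := ihr
    refine ⟨.node Bl Br, ⟨i, rfl, hbl, hbr⟩, ?_, ?_, ?_⟩
    · rw [← Finset.disjUnion_eq_union s t hdisj]
      simp [SEBracket.players, hpl, hpr, Finset.disjUnion]
    · simp [SEBracket.played, hwl, hwr, hab, hEl, hEr]
    · simp [SEBracket.winner, hwl, hwr, hab]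

theorem seeding_iff_sba_general [Fintype V] (A : V → V → Prop) [DecidableRel A]
    (htotal : ∀ a b : V, a ≠ b → A a b ∨ A b a)
    (m : ℕ)
    (S : Finset (V × V)) :
    (∃ B : SEBracket V, B.balanced m ∧ B.players = Finset.univ.val ∧ S ⊆ B.played A) ↔
    (∃ (E : Finset (V × V)) (r : V), IsBAE A Finset.univ E r m ∧ S ⊆ E) := by
  constructor
  · rintro ⟨B, hbal, hplayers, hS⟩
    have hnodup : B.players.Nodup := hplayers ▸ Finset.univ.nodup
    have hB := B.isBAE_played A htotal m hbal hnodup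
    rw [hplayers, Finset.val_toFinset] at hB
    exact ⟨_, _, hB, hS⟩
  · rintro ⟨E, r, hE, hS⟩
    obtain ⟨B, hbal, hplayers, hplayed, -⟩ := hE.exists_bracket
    exact ⟨B, hbal, hplayers, hplayed ▸ hS⟩

/-- For a tournament `T` (relation `A`) on `2 ^ m` vertices and a set `S` of arcs of `T`,
there is a seeding (a balanced bracket with every player at exactly one leaf) whose
single-elimination tournament plays every match of `S`, iff `T` has a spanning binomial
arborescence whose arc set contains `S`. -/
theorem seeding_iff_sba [Fintype V] (A : V → V → Prop) [DecidableRel A]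
    (hasym : ∀ a b : V, A a b → ¬ A b a)
    (htotal : ∀ a b : V, a ≠ b → A a b ∨ A b a)
    (m : ℕ) (hcard : Fintype.card V = 2 ^ m)
    (S : Finset (V × V)) (hS : ∀ e ∈ S, A e.1 e.2) :
    (∃ B : SEBracket V, B.balanced m ∧ B.players = Finset.univ.val ∧ S ⊆ B.played A) ↔
    (∃ (E : Finset (V × V)) (r : V), IsBAE A Finset.univ E r m ∧ S ⊆ E) :=
  seeding_iff_sba_general A htotal m S
end

section
/- Pack correctness (invariant): Let Q be a rooted forest whose components' vertex sets partition a set P of roots such that each root w of P roots a binomial arborescence of height at most j in Q, and suppose the sum over w in P of 2^{height_Q(w)} is at least 2^j. Consider the process that repeatedly picks two roots x, y in the current root set with equal maximal height (in the current forest), adds an arc from x to y, and removes y from the root set, stopping when some root has height exactly j. Then this process terminates with a root v whose descendants form a binomial arborescence of height exactly j. -/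
/-! Along the process the roots keep disjoint descendant sets, each root still roots a binomial
arborescence of height at most `j`, and `∑ 2 ^ height` over the roots is conserved, since merging
two arborescences of height `i` yields one of height `i + 1`. While no root has height `j`, all
heights are below `j`, and distinct heights below `j` contribute less than `2 ^ j`; so two roots
share a height and the process can go on. -/

universe u

variable {V : Type*} [DecidableEq V]

/-- One step of the `Pack` process, on states `(E, P)` consisting of the current arc set
and the current set of roots: if no root yet has height `j`, pick two distinct roots
`x, y` of equal height, maximal among heights occurring at least twice, add the arc
`(x, y)` and remove `y` from the root set. -/
def PackStep (s : Finset V) (j : ℕ) (p q : Finset (V × V) × Finset V) : Prop :=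
  (∀ r ∈ p.2, hgt s p.1 r ≠ j) ∧
  ∃ x ∈ p.2, ∃ y ∈ p.2, x ≠ y ∧ hgt s p.1 x = hgt s p.1 y ∧
    (∀ a ∈ p.2, ∀ b ∈ p.2, a ≠ b → hgt s p.1 a = hgt s p.1 b → hgt s p.1 a ≤ hgt s p.1 x) ∧
    q = (insert (x, y) p.1, p.2.erase y)

open Finset Relation

set_option linter.unusedSectionVars false

section Reach

variable {E : Finset (V × V)} {w x y z : V}

theorem reflTransGen_insert_iff_of_not_reach
    (h : ¬ ReflTransGen (fun a b => (a, b) ∈ E) w x) :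
    ReflTransGen (fun a b => (a, b) ∈ insert (x, y) E) w z ↔
      ReflTransGen (fun a b => (a, b) ∈ E) w z := by
  refine ⟨fun hz => ?_, ReflTransGen.mono (fun _ _ => mem_insert_of_mem) _ _⟩
  induction hz with
  | refl => exact .refl
  | tail _ hbc ih =>
    rcases mem_insert.1 hbc with he | he
    · cases he
      exact absurd ih h
    · exact ih.tail he

theorem reflTransGen_insert_self_iff :
    ReflTransGen (fun a b => (a, b) ∈ insert (x, y) E) x z ↔
      ReflTransGen (fun a b => (a, b) ∈ E) x z ∨ ReflTransGen (fun a b => (a, b) ∈ E) y z := by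
  have hmono : ∀ u v, ReflTransGen (fun a b => (a, b) ∈ E) u v →
      ReflTransGen (fun a b => (a, b) ∈ insert (x, y) E) u v :=
    ReflTransGen.mono fun _ _ => mem_insert_of_mem
  refine ⟨fun hz => ?_, ?_⟩
  · induction hz with
    | refl => exact .inl .refl
    | tail _ hbc ih =>
      rcases mem_insert.1 hbc with he | he
      · cases he
        exact .inr .refl
      · exact ih.imp (·.tail he) (·.tail he)
  · rintro (h | h)
    · exact hmono _ _ h
    · exact .head (mem_insert_self _ _) (hmono _ _ h)

end Reach

section Desc

variable {s : Finset V} {E : Finset (V × V)} {w x y z : V}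

theorem mem_desc :
    z ∈ desc s E x ↔ z ∈ s ∧ ReflTransGen (fun a b => (a, b) ∈ E) x z := by
  simp [desc, cfilter]

theorem self_mem_desc (hx : x ∈ s) : x ∈ desc s E x :=
  mem_desc.2 ⟨hx, .refl⟩

theorem desc_subset : desc s E x ⊆ s :=
  fun _ h => (mem_desc.1 h).1

theorem mem_subArcs {e : V × V} :
    e ∈ subArcs s E x ↔ e ∈ E ∧ e.1 ∈ desc s E x ∧ e.2 ∈ desc s E x := by
  simp [subArcs, cfilter]

theorem mem_desc_of_arc {a b : V} (hab : (a, b) ∈ E) (ha : a ∈ desc s E x) (hb : b ∈ s) :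
    b ∈ desc s E x :=
  mem_desc.2 ⟨hb, (mem_desc.1 ha).2.tail hab⟩

theorem desc_insert_self : desc s (insert (x, y) E) x = desc s E x ∪ desc s E y := by
  ext z
  simp only [mem_desc, mem_union, reflTransGen_insert_self_iff]
  tauto

theorem desc_insert_of_notMem (hxs : x ∈ s) (hx : x ∉ desc s E w) :
    desc s (insert (x, y) E) w = desc s E w := by
  have hnr : ¬ ReflTransGen (fun a b => (a, b) ∈ E) w x := fun h => hx (mem_desc.2 ⟨hxs, h⟩)
  ext z
  simp only [mem_desc, reflTransGen_insert_iff_of_not_reach hnr]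

theorem subArcs_insert_of_notMem (hxs : x ∈ s) (hx : x ∉ desc s E w) :
    subArcs s (insert (x, y) E) w = subArcs s E w := by
  ext ⟨a, b⟩
  simp only [mem_subArcs, desc_insert_of_notMem hxs hx, mem_insert, Prod.mk.injEq]
  constructor
  · rintro ⟨⟨rfl, rfl⟩ | hab, ha, hb⟩
    · exact absurd ha hx
    · exact ⟨hab, ha, hb⟩
  · exact fun ⟨hab, ha, hb⟩ => ⟨.inr hab, ha, hb⟩

-- No arc of `E` joins the two disjoint descendant sets, since descendant sets are closed under arcs.
theorem subArcs_insert_self (hxs : x ∈ s) (hys : y ∈ s)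
    (hd : Disjoint (desc s E x) (desc s E y)) :
    subArcs s (insert (x, y) E) x = insert (x, y) (subArcs s E x ∪ subArcs s E y) := by
  ext ⟨a, b⟩
  simp only [mem_subArcs, desc_insert_self, mem_insert, mem_union, Prod.mk.injEq]
  constructor
  · rintro ⟨hab | hab, ha, hb⟩
    · exact .inl hab
    rcases ha with ha | ha <;> rcases hb with hb | hb
    · exact .inr (.inl ⟨hab, ha, hb⟩)
    · exact absurd (mem_desc_of_arc hab ha (desc_subset hb)) (disjoint_right.1 hd hb)
    · exact absurd (mem_desc_of_arc hab ha (desc_subset hb)) (disjoint_left.1 hd hb)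
    · exact .inr (.inr ⟨hab, ha, hb⟩)
  · rintro (⟨rfl, rfl⟩ | ⟨hab, ha, hb⟩ | ⟨hab, ha, hb⟩)
    · exact ⟨.inl ⟨rfl, rfl⟩, .inl (self_mem_desc hxs), .inr (self_mem_desc hys)⟩
    · exact ⟨.inr hab, .inl ha, .inl hb⟩
    · exact ⟨.inr hab, .inr ha, .inr hb⟩

end Desc

section BinomialArborescence

variable {A : V → V → Prop} {t : Finset V} {F : Finset (V × V)} {a : V} {i : ℕ}

theorem IsBAE.card_eq (h : IsBAE A t F a i) : t.card = 2 ^ i := by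
  induction h with
  | single => rfl
  | join _ _ hd _ ih₁ ih₂ => rw [card_union_of_disjoint hd, ih₁, ih₂, pow_succ, mul_two]

theorem IsBAE.root_mem (h : IsBAE A t F a i) : a ∈ t := by
  induction h with
  | single => exact mem_singleton_self _
  | join _ _ _ _ ih _ => exact mem_union_left _ ih

theorem IsBAE.hgt_eq {s : Finset V} {E : Finset (V × V)} (h : IsBAE A (desc s E a) F a i) :
    hgt s E a = i := by
  rw [hgt, h.card_eq, Nat.log_pow one_lt_two]

end BinomialArborescence

theorem exists_ne_eq_of_pow_le_sum_two_pow {α : Type*} {P : Finset α} {f : α → ℕ} {j : ℕ}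
    (hlt : ∀ a ∈ P, f a < j) (hsum : 2 ^ j ≤ ∑ a ∈ P, 2 ^ f a) :
    ∃ a ∈ P, ∃ b ∈ P, a ≠ b ∧ f a = f b := by
  by_contra! hinj
  have hlt' : ∑ n ∈ P.image f, 2 ^ n < 2 ^ j :=
    Nat.geomSum_lt le_rfl fun n hn => by
      obtain ⟨a, ha, rfl⟩ := mem_image.1 hn
      exact hlt a ha
  rw [sum_image fun a ha b hb => not_imp_not.1 (hinj a ha b hb)] at hlt'
  exact hlt'.not_ge hsum

structure PackInv (s : Finset V) (j : ℕ) (p : Finset (V × V) × Finset V) : Prop where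
  disjoint : ∀ w ∈ p.2, ∀ w' ∈ p.2, w ≠ w' → Disjoint (desc s p.1 w) (desc s p.1 w')
  isBAE : ∀ w ∈ p.2, ∃ i ≤ j, IsBAE (fun _ _ => True) (desc s p.1 w) (subArcs s p.1 w) w i
  pow_le_sum : 2 ^ j ≤ ∑ w ∈ p.2, 2 ^ hgt s p.1 w

namespace PackInv

variable {s : Finset V} {j : ℕ} {p q : Finset (V × V) × Finset V} {w x y : V}

theorem hgt_le (h : PackInv s j p) (hw : w ∈ p.2) : hgt s p.1 w ≤ j := by
  obtain ⟨i, hij, hB⟩ := h.isBAE w hw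
  rwa [hB.hgt_eq]

theorem mem_desc_self (h : PackInv s j p) (hw : w ∈ p.2) : w ∈ desc s p.1 w := by
  obtain ⟨i, -, hB⟩ := h.isBAE w hw
  exact hB.root_mem

theorem notMem_desc (h : PackInv s j p) (hx : x ∈ p.2) (hw : w ∈ p.2) (hwx : w ≠ x) :
    x ∉ desc s p.1 w :=
  disjoint_right.1 (h.disjoint w hw x hx hwx) (h.mem_desc_self hx)

theorem desc_insert_of_ne (h : PackInv s j p) (hx : x ∈ p.2) (hw : w ∈ p.2) (hwx : w ≠ x) :
    desc s (insert (x, y) p.1) w = desc s p.1 w :=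
  desc_insert_of_notMem (desc_subset (h.mem_desc_self hx)) (h.notMem_desc hx hw hwx)

theorem subArcs_insert_of_ne (h : PackInv s j p) (hx : x ∈ p.2) (hw : w ∈ p.2) (hwx : w ≠ x) :
    subArcs s (insert (x, y) p.1) w = subArcs s p.1 w :=
  subArcs_insert_of_notMem (desc_subset (h.mem_desc_self hx)) (h.notMem_desc hx hw hwx)

section Merge

variable (h : PackInv s j p) (hx : x ∈ p.2) (hy : y ∈ p.2) (hxy : x ≠ y) {i : ℕ}
  (hBx : IsBAE (fun _ _ => True) (desc s p.1 x) (subArcs s p.1 x) x i)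
  (hBy : IsBAE (fun _ _ => True) (desc s p.1 y) (subArcs s p.1 y) y i)
include h hx hy hxy hBx hBy

theorem isBAE_insert : IsBAE (fun _ _ => True) (desc s (insert (x, y) p.1) x)
    (subArcs s (insert (x, y) p.1) x) x (i + 1) := by
  have hDxy := h.disjoint x hx y hy hxy
  rw [desc_insert_self, subArcs_insert_self (desc_subset (h.mem_desc_self hx))
    (desc_subset (h.mem_desc_self hy)) hDxy]
  exact hBx.join hBy hDxy trivial

theorem sum_two_pow_hgt_insert :
    ∑ w ∈ p.2.erase y, 2 ^ hgt s (insert (x, y) p.1) w = ∑ w ∈ p.2, 2 ^ hgt s p.1 w := by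
  have hxe : x ∈ p.2.erase y := mem_erase.2 ⟨hxy, hx⟩
  have hrest : ∑ w ∈ (p.2.erase y).erase x, 2 ^ hgt s (insert (x, y) p.1) w
      = ∑ w ∈ (p.2.erase y).erase x, 2 ^ hgt s p.1 w :=
    sum_congr rfl fun w hw => by
      obtain ⟨hwx, hw⟩ := mem_erase.1 hw
      rw [hgt, hgt, h.desc_insert_of_ne hx (mem_of_mem_erase hw) hwx]
  rw [← add_sum_erase _ _ hxe, hrest, (h.isBAE_insert hx hy hxy hBx hBy).hgt_eq,
    ← add_sum_erase _ _ hy, ← add_sum_erase _ _ hxe, hBx.hgt_eq, hBy.hgt_eq, pow_succ]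
  ring

end Merge

theorem packStep (h : PackInv s j p) (hstep : PackStep s j p q) : PackInv s j q := by
  obtain ⟨hne, x, hx, y, hy, hxy, hheq, -, rfl⟩ := hstep
  obtain ⟨i, hij, hBx⟩ := h.isBAE x hx
  obtain ⟨i', -, hBy⟩ := h.isBAE y hy
  obtain rfl : i = i' := by rw [← hBx.hgt_eq, ← hBy.hgt_eq, hheq]
  have hdescx : desc s (insert (x, y) p.1) x = desc s p.1 x ∪ desc s p.1 y := desc_insert_self
  refine ⟨fun w hw w' hw' hww' => ?_, fun w hw => ?_, ?_⟩
  · obtain ⟨hwy, hwP⟩ := mem_erase.1 hw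
    obtain ⟨hw'y, hw'P⟩ := mem_erase.1 hw'
    by_cases hwx : w = x
    · subst hwx
      rw [hdescx, h.desc_insert_of_ne hx hw'P hww'.symm]
      exact disjoint_union_left.2 ⟨h.disjoint _ hx _ hw'P hww', h.disjoint y hy w' hw'P hw'y.symm⟩
    by_cases hw'x : w' = x
    · subst hw'x
      rw [hdescx, h.desc_insert_of_ne hx hwP hwx]
      exact disjoint_union_right.2 ⟨h.disjoint w hwP _ hx hww', h.disjoint w hwP y hy hwy⟩
    rw [h.desc_insert_of_ne hx hwP hwx, h.desc_insert_of_ne hx hw'P hw'x]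
    exact h.disjoint w hwP w' hw'P hww'
  · obtain ⟨-, hw⟩ := mem_erase.1 hw
    by_cases hwx : w = x
    · subst hwx
      exact ⟨i + 1, lt_of_le_of_ne hij (hBx.hgt_eq ▸ hne w hx), h.isBAE_insert hx hy hxy hBx hBy⟩
    · rw [h.desc_insert_of_ne hx hw hwx, h.subArcs_insert_of_ne hx hw hwx]
      exact h.isBAE w hw
  · exact (h.sum_two_pow_hgt_insert hx hy hxy hBx hBy).symm ▸ h.pow_le_sum

theorem exists_packStep (h : PackInv s j p) (hj : ∀ r ∈ p.2, hgt s p.1 r ≠ j) :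
    ∃ q, PackStep s j p q := by
  set pairs := (p.2 ×ˢ p.2).filter fun ab => ab.1 ≠ ab.2 ∧ hgt s p.1 ab.1 = hgt s p.1 ab.2
  have hmem {a b : V} : (a, b) ∈ pairs ↔ a ∈ p.2 ∧ b ∈ p.2 ∧ a ≠ b ∧ hgt s p.1 a = hgt s p.1 b := by
    simp only [pairs, mem_filter, mem_product, and_assoc]
  obtain ⟨a, ha, b, hb, hab⟩ := exists_ne_eq_of_pow_le_sum_two_pow
    (fun w hw => lt_of_le_of_ne (h.hgt_le hw) (hj w hw)) h.pow_le_sum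
  obtain ⟨⟨x, y⟩, hxy, hmax⟩ := exists_max_image pairs (fun ab => hgt s p.1 ab.1)
    ⟨(a, b), hmem.2 ⟨ha, hb, hab⟩⟩
  obtain ⟨hx, hy, hne, hheq⟩ := hmem.1 hxy
  exact ⟨_, hj, x, hx, y, hy, hne, hheq,
    fun a ha b hb hab hh => hmax (a, b) (hmem.2 ⟨ha, hb, hab, hh⟩), rfl⟩

end PackInv

theorem pack_correct_general (s : Finset V) (j : ℕ) (E0 : Finset (V × V)) (P : Finset V)
    (hdisj : ∀ w ∈ P, ∀ w' ∈ P, w ≠ w' → Disjoint (desc s E0 w) (desc s E0 w'))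
    (hBA : ∀ w ∈ P, ∃ i ≤ j, IsBAE (fun _ _ => True) (desc s E0 w) (subArcs s E0 w) w i)
    (hsum : 2 ^ j ≤ ∑ w ∈ P, 2 ^ hgt s E0 w) :
    ∀ Q : Finset (V × V) × Finset V, Relation.ReflTransGen (PackStep s j) (E0, P) Q →
      (∃ v ∈ Q.2, IsBAE (fun _ _ => True) (desc s Q.1 v) (subArcs s Q.1 v) v j) ∨
      ∃ Q', PackStep s j Q Q' := by
  intro Q hQ
  have hinv : PackInv s j Q := by
    induction hQ with
    | refl => exact ⟨hdisj, hBA, hsum⟩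
    | tail _ hstep ih => exact ih.packStep hstep
  by_cases hj : ∃ v ∈ Q.2, hgt s Q.1 v = j
  · obtain ⟨v, hv, rfl⟩ := hj
    obtain ⟨i, -, hB⟩ := hinv.isBAE v hv
    exact .inl ⟨v, hv, hB.hgt_eq ▸ hB⟩
  · exact .inr (hinv.exists_packStep fun r hr hrj => hj ⟨r, hr, hrj⟩)

/-- `Pack` invariant/correctness: starting from a rooted forest in which every root of
`P` roots a binomial arborescence of height at most `j`, the roots' subtrees are
pairwise disjoint, and the sum of `2 ^ height` over the roots is at least `2 ^ j`,
every state reachable by the greedy merging process either already contains a root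
whose descendants form a binomial arborescence of height exactly `j`, or admits a
further step; hence the process terminates (each step removes a root) with a root `v`
whose descendants form a binomial arborescence of height exactly `j`. -/
theorem pack_correct (s : Finset V) (j : ℕ) (E0 : Finset (V × V)) (P : Finset V)
    (hroot : ∀ w ∈ P, ∀ e ∈ E0, e.2 ≠ w)
    (hdisj : ∀ w ∈ P, ∀ w' ∈ P, w ≠ w' → Disjoint (desc s E0 w) (desc s E0 w'))
    (hBA : ∀ w ∈ P, ∃ i ≤ j, IsBAE (fun _ _ => True) (desc s E0 w) (subArcs s E0 w) w i)
    (hsum : 2 ^ j ≤ ∑ w ∈ P, 2 ^ hgt s E0 w) :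
    ∀ Q : Finset (V × V) × Finset V, Relation.ReflTransGen (PackStep s j) (E0, P) Q →
      (∃ v ∈ Q.2, IsBAE (fun _ _ => True) (desc s Q.1 v) (subArcs s Q.1 v) v j) ∨
      ∃ Q', PackStep s j Q Q' :=
  pack_correct_general s j E0 P hdisj hBA hsum
end

section
/- If a multiset A of powers of two, each dividing 2^j, sums to exactly 2^j, and y is an element of a multiset R of powers of two also summing to 2^j with A ≠ R (as multisets) and every element of A \ R is at most y, then there exists a sub-multiset Z of A \ R whose sum equals y. -/
/-!
Every element of `A - R` is a power of two at most `y = 2 ^ m`, hence divides `2 ^ m`, and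
`(A - R).sum = (R - A).sum ≥ y` because `A` and `R` have the same sum. A multiset of divisors of
`2 ^ m` with sum at least `2 ^ m` has a sub-multiset with sum exactly `2 ^ m`: if `2 ^ m` itself
does not occur, all elements divide `2 ^ (m - 1)`, and by induction we can extract a sub-multiset
of sum `2 ^ (m - 1)` twice.
-/

open Multiset

theorem Nat.dvd_prime_pow_of_dvd_pow_succ_of_ne {p a k : ℕ} (hp : p.Prime)
    (hdvd : a ∣ p ^ (k + 1)) (hne : a ≠ p ^ (k + 1)) : a ∣ p ^ k := by
  obtain ⟨l, hl, rfl⟩ := (Nat.dvd_prime_pow hp).mp hdvd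
  have hlk : l ≠ k + 1 := by rintro rfl; exact hne rfl
  exact pow_dvd_pow p (by omega)

theorem Multiset.sum_sub_eq_sum_sub {α : Type*} [DecidableEq α] [AddCancelCommMonoid α]
    {A R : Multiset α} (h : A.sum = R.sum) : (A - R).sum = (R - A).sum := by
  apply add_right_cancel (b := (A ∩ R).sum)
  rw [← sum_add, sub_add_inter, h, inter_comm, ← sum_add, sub_add_inter]

theorem Multiset.exists_le_sum_eq_add_self {S : Multiset ℕ} {n : ℕ}
    (h : ∀ T ≤ S, n ≤ T.sum → ∃ Z ≤ T, Z.sum = n) (hS : n + n ≤ S.sum) :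
    ∃ Z ≤ S, Z.sum = n + n := by
  obtain ⟨Z₁, hZ₁S, hZ₁⟩ := h S le_rfl (by omega)
  have hrest : (S - Z₁).sum + n = S.sum := by
    rw [← hZ₁, ← sum_add, tsub_add_cancel_of_le hZ₁S]
  obtain ⟨Z₂, hZ₂S, hZ₂⟩ := h (S - Z₁) tsub_le_self (by omega)
  exact ⟨Z₁ + Z₂, add_le_of_le_tsub_left_of_le hZ₁S hZ₂S, by rw [sum_add, hZ₁, hZ₂]⟩

theorem Multiset.exists_le_sum_eq_two_pow (i : ℕ) (S : Multiset ℕ)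
    (hdvd : ∀ a ∈ S, a ∣ 2 ^ i) (hS : 2 ^ i ≤ S.sum) : ∃ Z ≤ S, Z.sum = 2 ^ i := by
  induction i generalizing S with
  | zero =>
    obtain ⟨a, ha⟩ := exists_mem_of_ne_zero (by rintro rfl; simp at hS : S ≠ 0)
    have ha1 : a = 1 := Nat.eq_one_of_dvd_one (by simpa using hdvd a ha)
    exact ⟨{a}, singleton_le.mpr ha, by simp [ha1]⟩
  | succ i ih =>
    by_cases hmem : 2 ^ (i + 1) ∈ S
    · exact ⟨{2 ^ (i + 1)}, singleton_le.mpr hmem, sum_singleton _⟩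
    have hdvd' : ∀ a ∈ S, a ∣ 2 ^ i := fun a ha =>
      Nat.dvd_prime_pow_of_dvd_pow_succ_of_ne Nat.prime_two (hdvd a ha)
        (ne_of_mem_of_not_mem ha hmem)
    rw [pow_succ, mul_two] at hS ⊢
    exact exists_le_sum_eq_add_self
      (fun T hT hTsum => ih T (fun a ha => hdvd' a (mem_of_le hT ha)) hTsum) hS

theorem exists_submultiset_sum_eq_general (j : ℕ) (A R : Multiset ℕ)
    (hA : ∀ a ∈ A, (∃ i : ℕ, a = 2 ^ i) ∧ a ∣ 2 ^ j)
    (hR : ∀ a ∈ R, ∃ i : ℕ, a = 2 ^ i)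
    (hAsum : A.sum = 2 ^ j) (hRsum : R.sum = 2 ^ j)
    (y : ℕ) (hy : y ∈ R - A)
    (hle : ∀ a ∈ A - R, a ≤ y) :
    ∃ Z ≤ A - R, Z.sum = y := by
  obtain ⟨m, rfl⟩ := hR y (mem_of_le tsub_le_self hy)
  have hsum : (A - R).sum = (R - A).sum := sum_sub_eq_sum_sub (hAsum.trans hRsum.symm)
  refine exists_le_sum_eq_two_pow m (A - R) (fun a ha => ?_)
    (hsum ▸ single_le_sum (fun _ _ => Nat.zero_le _) _ hy)
  obtain ⟨⟨k, rfl⟩, -⟩ := hA a (mem_of_le tsub_le_self ha)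
  exact (Nat.pow_dvd_pow_iff_le_right one_lt_two).mpr
    ((Nat.pow_le_pow_iff_right one_lt_two).mp (hle _ ha))

/-- If a multiset `A` of powers of two, each dividing `2 ^ j`, sums to exactly `2 ^ j`,
and `y` is an element of `R \ A` where `R` is a multiset of powers of two also summing
to `2 ^ j`, with `A ≠ R` and every element of `A \ R` at most `y`, then some
sub-multiset `Z` of `A \ R` has sum exactly `y`. -/
theorem exists_submultiset_sum_eq (j : ℕ) (A R : Multiset ℕ)
    (hA : ∀ a ∈ A, (∃ i : ℕ, a = 2 ^ i) ∧ a ∣ 2 ^ j)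
    (hR : ∀ a ∈ R, ∃ i : ℕ, a = 2 ^ i)
    (hAsum : A.sum = 2 ^ j) (hRsum : R.sum = 2 ^ j)
    (y : ℕ) (hy : y ∈ R - A) (hne : A ≠ R)
    (hle : ∀ a ∈ A - R, a ≤ y) :
    ∃ Z ≤ A - R, Z.sum = y :=
  exists_submultiset_sum_eq_general j A R hA hR hAsum hRsum y hy hle
end
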